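/- For every unit vector ξ ∈ ℝ³ (|ξ| = 1), the matrix b(ξ)*b(ξ) satisfies α₀·1₃ ≤ b(ξ)*b(ξ) ≤ α₁·1₃ in the sense of quadratic forms, where α₀ = min{‖μ₀‖⁻¹, ‖μ₀⁻¹‖⁻¹} and α₁ = ‖μ₀‖ + ‖μ₀⁻¹‖ (operator norms). -/

import Mathlib

open Matrix
open scoped Matrix.Norms.L2Operator

/-- The cross-product matrix `r(ξ)`, satisfying `r(ξ) v = ξ × v`. -/
def crossMatrix (ξ : Fin 3 → ℝ) : Matrix (Fin 3) (Fin 3) ℝ :=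
  !![0, -ξ 2, ξ 1; ξ 2, 0, -ξ 0; -ξ 1, ξ 0, 0]

/-- The `4×3` symbol `b(ξ)` with upper `3×3` block `r(ξ) μ₀^{-1/2}` and bottom row
`ξᵗ μ₀^{1/2}`, where `s = μ₀^{1/2}`. -/
noncomputable def symbolB (s : Matrix (Fin 3) (Fin 3) ℝ) (ξ : Fin 3 → ℝ) :
    Matrix (Fin 4) (Fin 3) ℝ :=
  Matrix.of fun i j =>
    if h : (i : ℕ) < 3 then (crossMatrix ξ * s⁻¹) ⟨i, h⟩ j else (ξ ᵥ* s) j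

/-!
Write `μ₀ = s * s` and `x = s y`. The quadratic form of `b(ξ)ᵀ b(ξ)` at `x` is
`|ξ × y|² + (ξ ⬝ μ₀ y)²`, while `|x|² = y ⬝ μ₀ y`. The upper bound is Cauchy–Schwarz on each
term. For the lower bound split `y = p + t ξ` with `p ⊥ ξ`: then `|ξ × y|² = |p|² ≥ α p ⬝ μ₀ p`
since `α ≤ ‖μ₀‖⁻¹`, and what remains is `(ξ ⬝ μ₀ y - α t)² + α (ξ ⬝ μ₀ ξ - α) t²`. This is
nonnegative because `ξ ⬝ μ₀ ξ ≥ ‖μ₀⁻¹‖⁻¹`, by Cauchy–Schwarz applied to `(s ξ) ⬝ (s⁻¹ ξ) = 1`.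
-/

namespace Matrix

variable {m n : Type*} [Fintype m] [Fintype n]

theorem mulVec_dotProduct_mulVec {α : Type*} [CommSemiring α] (A : Matrix m n α)
    (B : Matrix m n α) (u w : n → α) : (A *ᵥ u) ⬝ᵥ (B *ᵥ w) = u ⬝ᵥ ((Aᵀ * B) *ᵥ w) := by
  rw [← mulVec_mulVec, dotProduct_transpose_mulVec, dotProduct_comm]

theorem dotProduct_sq_le_dotProduct_self_mul (v w : n → ℝ) :
    (v ⬝ᵥ w) ^ 2 ≤ (v ⬝ᵥ v) * (w ⬝ᵥ w) := by
  simpa [dotProduct, sq] using Finset.sum_mul_sq_le_sq_mul_sq Finset.univ v w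

theorem dotProduct_mulVec_le_norm_mul [DecidableEq n] (A : Matrix n n ℝ) (x : n → ℝ) :
    x ⬝ᵥ (A *ᵥ x) ≤ ‖A‖ * (x ⬝ᵥ x) := by
  have hx : x ⬝ᵥ x = ‖WithLp.toLp 2 x‖ ^ 2 := by
    rw [← real_inner_self_eq_norm_sq, EuclideanSpace.inner_toLp_toLp, star_trivial]
  calc x ⬝ᵥ (A *ᵥ x) = inner ℝ (WithLp.toLp 2 x) (WithLp.toLp 2 (A *ᵥ x)) := by
        rw [EuclideanSpace.inner_toLp_toLp, star_trivial, dotProduct_comm]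
  _ ≤ ‖WithLp.toLp 2 x‖ * ‖WithLp.toLp 2 (A *ᵥ x)‖ := real_inner_le_norm _ _
  _ ≤ ‖WithLp.toLp 2 x‖ * (‖A‖ * ‖WithLp.toLp 2 x‖) := by
        gcongr; exact l2_opNorm_mulVec A _
  _ = ‖A‖ * (x ⬝ᵥ x) := by rw [hx]; ring

theorem dotProduct_self_nonneg (v : n → ℝ) : 0 ≤ v ⬝ᵥ v := by
  simpa using dotProduct_star_self_nonneg v

theorem posSemidef_transpose_mul_sub_smul_one_iff [DecidableEq n] (B : Matrix m n ℝ) (c : ℝ) :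
    (Bᵀ * B - c • 1).PosSemidef ↔ ∀ x, c * (x ⬝ᵥ x) ≤ (B *ᵥ x) ⬝ᵥ (B *ᵥ x) := by
  have hB : (Bᵀ * B - c • 1).IsHermitian := by
    simp [IsHermitian, conjTranspose_eq_transpose_of_trivial, transpose_sub]
  rw [posSemidef_iff_dotProduct_mulVec, and_iff_right hB]
  refine forall_congr' fun x => ?_
  rw [star_trivial, sub_mulVec, dotProduct_sub, sub_nonneg, smul_mulVec, one_mulVec,
    dotProduct_smul, smul_eq_mul, mulVec_dotProduct_mulVec]

theorem posSemidef_smul_one_sub_transpose_mul_iff [DecidableEq n] (B : Matrix m n ℝ) (c : ℝ) :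
    (c • 1 - Bᵀ * B).PosSemidef ↔ ∀ x, (B *ᵥ x) ⬝ᵥ (B *ᵥ x) ≤ c * (x ⬝ᵥ x) := by
  have hB : (c • 1 - Bᵀ * B).IsHermitian := by
    simp [IsHermitian, conjTranspose_eq_transpose_of_trivial, transpose_sub]
  rw [posSemidef_iff_dotProduct_mulVec, and_iff_right hB]
  refine forall_congr' fun x => ?_
  rw [star_trivial, sub_mulVec, dotProduct_sub, sub_nonneg, smul_mulVec, one_mulVec,
    dotProduct_smul, smul_eq_mul, mulVec_dotProduct_mulVec]

theorem dotProduct_mul_self_mulVec {s : Matrix n n ℝ} (hs : sᵀ = s) (x : n → ℝ) :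
    x ⬝ᵥ ((s * s) *ᵥ x) = (s *ᵥ x) ⬝ᵥ (s *ᵥ x) := by
  rw [mulVec_dotProduct_mulVec, hs]

theorem mul_dotProduct_mulVec_le_sub_sq_add_sq {μ : Matrix n n ℝ} (hμ : μᵀ = μ) {ξ : n → ℝ}
    (hξ : ξ ⬝ᵥ ξ = 1) {α : ℝ} (hα : 0 ≤ α) (hαμ : ∀ p, α * (p ⬝ᵥ (μ *ᵥ p)) ≤ p ⬝ᵥ p)
    (hαξ : α ≤ ξ ⬝ᵥ (μ *ᵥ ξ)) (y : n → ℝ) :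
    α * (y ⬝ᵥ (μ *ᵥ y)) ≤ y ⬝ᵥ y - (ξ ⬝ᵥ y) ^ 2 + (ξ ⬝ᵥ (μ *ᵥ y)) ^ 2 := by
  set t := ξ ⬝ᵥ y
  set b := ξ ⬝ᵥ (μ *ᵥ y)
  have hyξ : y ⬝ᵥ (μ *ᵥ ξ) = b := by simpa [hμ] using dotProduct_transpose_mulVec μ y ξ
  have hp : (y - t • ξ) ⬝ᵥ (y - t • ξ) = y ⬝ᵥ y - t ^ 2 := by
    simp only [dotProduct_sub, sub_dotProduct, dotProduct_smul, smul_dotProduct, smul_eq_mul,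
      hξ, dotProduct_comm y ξ]
    ring
  have hμp : (y - t • ξ) ⬝ᵥ (μ *ᵥ (y - t • ξ)) =
      y ⬝ᵥ (μ *ᵥ y) - 2 * t * b + t ^ 2 * (ξ ⬝ᵥ (μ *ᵥ ξ)) := by
    simp only [mulVec_sub, mulVec_smul, dotProduct_sub, sub_dotProduct, dotProduct_smul,
      smul_dotProduct, smul_eq_mul, hyξ]
    ring
  have hperp := hαμ (y - t • ξ)
  rw [hp, hμp] at hperp
  nlinarith [sq_nonneg (b - α * t), mul_nonneg (mul_nonneg hα (sub_nonneg.2 hαξ)) (sq_nonneg t)]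

theorem inv_norm_inv_le_dotProduct_mul_self_mulVec [DecidableEq n] {s : Matrix n n ℝ}
    (hs : sᵀ = s) (hdet : IsUnit s.det) {ξ : n → ℝ} (hξ : ξ ⬝ᵥ ξ = 1) :
    ‖(s * s)⁻¹‖⁻¹ ≤ ξ ⬝ᵥ ((s * s) *ᵥ ξ) := by
  have hinv : (s⁻¹)ᵀ = s⁻¹ := by rw [transpose_nonsing_inv, hs]
  have hm := dotProduct_self_nonneg (s *ᵥ ξ)
  rw [← dotProduct_mul_self_mulVec hs] at hm
  have key : 1 ≤ ‖(s * s)⁻¹‖ * (ξ ⬝ᵥ ((s * s) *ᵥ ξ)) :=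
    calc (1 : ℝ) = ((s *ᵥ ξ) ⬝ᵥ (s⁻¹ *ᵥ ξ)) ^ 2 := by
          rw [mulVec_dotProduct_mulVec, hs, mul_nonsing_inv s hdet, one_mulVec, hξ, one_pow]
    _ ≤ ((s *ᵥ ξ) ⬝ᵥ (s *ᵥ ξ)) * ((s⁻¹ *ᵥ ξ) ⬝ᵥ (s⁻¹ *ᵥ ξ)) :=
          dotProduct_sq_le_dotProduct_self_mul _ _
    _ = (ξ ⬝ᵥ ((s * s) *ᵥ ξ)) * (ξ ⬝ᵥ ((s * s)⁻¹ *ᵥ ξ)) := by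
          rw [dotProduct_mul_self_mulVec hs, mul_inv_rev, dotProduct_mul_self_mulVec hinv]
    _ ≤ (ξ ⬝ᵥ ((s * s) *ᵥ ξ)) * (‖(s * s)⁻¹‖ * (ξ ⬝ᵥ ξ)) := by
          gcongr; exact dotProduct_mulVec_le_norm_mul _ _
    _ = ‖(s * s)⁻¹‖ * (ξ ⬝ᵥ ((s * s) *ᵥ ξ)) := by rw [hξ]; ring
  have hpos : 0 < ‖(s * s)⁻¹‖ := by
    by_contra! h
    rw [le_antisymm h (norm_nonneg _), zero_mul] at key
    exact absurd key (by norm_num)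
  exact (inv_le_iff_one_le_mul₀' hpos).2 key

end Matrix

theorem crossMatrix_mulVec (ξ v : Fin 3 → ℝ) : crossMatrix ξ *ᵥ v = ξ ⨯₃ v := by
  ext i
  fin_cases i <;> simp [crossMatrix, cross_apply, mulVec, dotProduct, Fin.sum_univ_three] <;> ring

theorem symbolB_mulVec_castSucc (s : Matrix (Fin 3) (Fin 3) ℝ) (ξ x : Fin 3 → ℝ) (i : Fin 3) :
    (symbolB s ξ *ᵥ x) i.castSucc = (crossMatrix ξ *ᵥ (s⁻¹ *ᵥ x)) i := by
  rw [mulVec_mulVec]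
  simp [symbolB, mulVec, dotProduct]

theorem symbolB_mulVec_last (s : Matrix (Fin 3) (Fin 3) ℝ) (ξ x : Fin 3 → ℝ) :
    (symbolB s ξ *ᵥ x) (Fin.last 3) = ξ ⬝ᵥ (s *ᵥ x) := by
  rw [dotProduct_mulVec]
  simp [symbolB, vecMul, mulVec, dotProduct]

theorem symbolB_mulVec_dotProduct_self (s : Matrix (Fin 3) (Fin 3) ℝ) (ξ x : Fin 3 → ℝ) :
    (symbolB s ξ *ᵥ x) ⬝ᵥ (symbolB s ξ *ᵥ x) =
      (ξ ⬝ᵥ ξ) * ((s⁻¹ *ᵥ x) ⬝ᵥ (s⁻¹ *ᵥ x)) - (ξ ⬝ᵥ (s⁻¹ *ᵥ x)) ^ 2 + (ξ ⬝ᵥ (s *ᵥ x)) ^ 2 := by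
  rw [dotProduct, Fin.sum_univ_castSucc]
  simp only [symbolB_mulVec_castSucc, symbolB_mulVec_last, crossMatrix_mulVec]
  rw [← dotProduct.eq_1, cross_dot_cross, dotProduct_comm (s⁻¹ *ᵥ x) ξ]
  ring

section

variable {s : Matrix (Fin 3) (Fin 3) ℝ} {ξ : Fin 3 → ℝ}

theorem mul_dotProduct_self_le_symbolB_mulVec (hs : sᵀ = s) (hdet : IsUnit s.det)
    (hξ : ξ ⬝ᵥ ξ = 1) (x : Fin 3 → ℝ) :
    min ‖s * s‖⁻¹ ‖(s * s)⁻¹‖⁻¹ * (x ⬝ᵥ x) ≤ (symbolB s ξ *ᵥ x) ⬝ᵥ (symbolB s ξ *ᵥ x) := by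
  obtain ⟨y, rfl⟩ : ∃ y, x = s *ᵥ y :=
    ⟨s⁻¹ *ᵥ x, by rw [mulVec_mulVec, mul_nonsing_inv s hdet, one_mulVec]⟩
  rw [symbolB_mulVec_dotProduct_self, hξ, one_mul, mulVec_mulVec, nonsing_inv_mul s hdet,
    one_mulVec, mulVec_mulVec, ← dotProduct_mul_self_mulVec hs]
  have hss : (s * s)ᵀ = s * s := by rw [transpose_mul, hs]
  refine mul_dotProduct_mulVec_le_sub_sq_add_sq hss hξ (le_min (by positivity) (by positivity))
    (fun p => ?_) ((min_le_right _ _).trans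
      (inv_norm_inv_le_dotProduct_mul_self_mulVec hs hdet hξ)) y
  have hp := dotProduct_self_nonneg (s *ᵥ p)
  rw [← dotProduct_mul_self_mulVec hs] at hp
  calc min ‖s * s‖⁻¹ ‖(s * s)⁻¹‖⁻¹ * (p ⬝ᵥ ((s * s) *ᵥ p))
      ≤ ‖s * s‖⁻¹ * (‖s * s‖ * (p ⬝ᵥ p)) :=
        mul_le_mul (min_le_left _ _) (dotProduct_mulVec_le_norm_mul _ _) hp (by positivity)
    _ = (‖s * s‖⁻¹ * ‖s * s‖) * (p ⬝ᵥ p) := by ring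
    _ ≤ p ⬝ᵥ p := mul_le_of_le_one_left (dotProduct_self_nonneg p)
        (inv_mul_le_one_of_le₀ le_rfl (norm_nonneg _))

theorem symbolB_mulVec_dotProduct_self_le (hs : sᵀ = s) (hξ : ξ ⬝ᵥ ξ = 1) (x : Fin 3 → ℝ) :
    (symbolB s ξ *ᵥ x) ⬝ᵥ (symbolB s ξ *ᵥ x) ≤ (‖s * s‖ + ‖(s * s)⁻¹‖) * (x ⬝ᵥ x) := by
  have hinv : (s⁻¹)ᵀ = s⁻¹ := by rw [transpose_nonsing_inv, hs]
  have hcross : (s⁻¹ *ᵥ x) ⬝ᵥ (s⁻¹ *ᵥ x) ≤ ‖(s * s)⁻¹‖ * (x ⬝ᵥ x) := by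
    rw [← dotProduct_mul_self_mulVec hinv, ← Matrix.mul_inv_rev]
    exact dotProduct_mulVec_le_norm_mul _ _
  have hlast : (ξ ⬝ᵥ (s *ᵥ x)) ^ 2 ≤ ‖s * s‖ * (x ⬝ᵥ x) :=
    calc (ξ ⬝ᵥ (s *ᵥ x)) ^ 2 ≤ (ξ ⬝ᵥ ξ) * ((s *ᵥ x) ⬝ᵥ (s *ᵥ x)) :=
          dotProduct_sq_le_dotProduct_self_mul _ _
      _ = x ⬝ᵥ ((s * s) *ᵥ x) := by rw [hξ, one_mul, dotProduct_mul_self_mulVec hs]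
      _ ≤ ‖s * s‖ * (x ⬝ᵥ x) := dotProduct_mulVec_le_norm_mul _ _
  rw [symbolB_mulVec_dotProduct_self, hξ, one_mul]
  nlinarith [sq_nonneg (ξ ⬝ᵥ (s⁻¹ *ᵥ x))]

end

theorem symbolB_quadratic_form_bounds_general (μ₀ s : Matrix (Fin 3) (Fin 3) ℝ)
    (hs : s.PosDef) (hssymm : s.IsSymm) (hsq : s * s = μ₀)
    (ξ : Fin 3 → ℝ) (hξ : ∑ i, ξ i ^ 2 = 1) :
    ((symbolB s ξ)ᵀ * symbolB s ξ - min ‖μ₀‖⁻¹ ‖μ₀⁻¹‖⁻¹ • (1 : Matrix (Fin 3) (Fin 3) ℝ)).PosSemidef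
      ∧ ((‖μ₀‖ + ‖μ₀⁻¹‖) • (1 : Matrix (Fin 3) (Fin 3) ℝ)
          - (symbolB s ξ)ᵀ * symbolB s ξ).PosSemidef := by
  subst hsq
  have hdet : IsUnit s.det := hs.det_pos.ne'.isUnit
  have hξ' : ξ ⬝ᵥ ξ = 1 := by simpa [dotProduct, sq] using hξ
  exact ⟨(posSemidef_transpose_mul_sub_smul_one_iff _ _).2
      (mul_dotProduct_self_le_symbolB_mulVec hssymm hdet hξ'),
    (posSemidef_smul_one_sub_transpose_mul_iff _ _).2
      (symbolB_mulVec_dotProduct_self_le hssymm hξ')⟩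

/-- for every unit vector `ξ ∈ ℝ³`,
`α₀ · 1₃ ≤ b(ξ)* b(ξ) ≤ α₁ · 1₃` in the sense of quadratic forms, where
`α₀ = min (‖μ₀‖⁻¹, ‖μ₀⁻¹‖⁻¹)` and `α₁ = ‖μ₀‖ + ‖μ₀⁻¹‖` (L² operator norms). -/
theorem symbolB_quadratic_form_bounds (μ₀ s : Matrix (Fin 3) (Fin 3) ℝ)
    (hμ₀ : μ₀.PosDef) (hμ₀symm : μ₀.IsSymm)
    (hs : s.PosDef) (hssymm : s.IsSymm) (hsq : s * s = μ₀)
    (ξ : Fin 3 → ℝ) (hξ : ∑ i, ξ i ^ 2 = 1) :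
    ((symbolB s ξ)ᵀ * symbolB s ξ - min ‖μ₀‖⁻¹ ‖μ₀⁻¹‖⁻¹ • (1 : Matrix (Fin 3) (Fin 3) ℝ)).PosSemidef
      ∧ ((‖μ₀‖ + ‖μ₀⁻¹‖) • (1 : Matrix (Fin 3) (Fin 3) ℝ)
          - (symbolB s ξ)ᵀ * symbolB s ξ).PosSemidef :=
  symbolB_quadratic_form_bounds_general μ₀ s hs hssymm hsq ξ hξ
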